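/- arXiv:2412.08042 — 2 statements merged into one kernel-verified Lean document; each statement's English description precedes it below -/
import Mathlib

section
/- Weight normalization with treatment indicators (first display in the proof of Theorem 5): Assume (A3). Then for every a̲ ∈ {0,1}^m and for each W ∈ {W_sw, W_rsw^(m), W_psw^(m)}: 𝔼[1{A̲(K−m)=a̲} · W] = P(A̲(K−m)=a̲). -/
open MeasureTheory Finset
open scoped Classical

namespace MSMPaper

noncomputable section

variable {Ω : Type*} [MeasurableSpace Ω] {𝓛 : Type*}

/-- Conditional probability `P(E | F) = P(E ∩ F) / P(F)` as a real number
(junk value `0` when `P F = 0`). -/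
def cP (P : Measure Ω) (E F : Set Ω) : ℝ := (P (E ∩ F)).toReal / (P F).toReal

variable {K : ℕ}

/-- Event `Ā(t−1) = b̄` (treatment history up to, not including, time `t`). -/
def Apast (A : Fin K → Ω → Bool) (t : ℕ) (b : Fin K → Bool) : Set Ω :=
  {ω | ∀ k : Fin K, (k : ℕ) < t → A k ω = b k}

/-- Event `L̄(t) = l̄` (covariate history up to and including time `t`). -/
def Lpast (L : Fin K → Ω → 𝓛) (t : ℕ) (l : Fin K → 𝓛) : Set Ω :=
  {ω | ∀ k : Fin K, (k : ℕ) ≤ t → L k ω = l k}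

/-- Event `A̲(s, t−1) = b` (treatment history from time `s` up to, not including, `t`). -/
def Aseg (A : Fin K → Ω → Bool) (s t : ℕ) (b : Fin K → Bool) : Set Ω :=
  {ω | ∀ k : Fin K, s ≤ (k : ℕ) → (k : ℕ) < t → A k ω = b k}

/-- Event `A̲(K−m) = a̲` for a (last-`m`) treatment vector `as`. -/
def EtrV (A : Fin K → Ω → Bool) (m : ℕ) (as : Fin K → Bool) : Set Ω :=
  {ω | ∀ k : Fin K, K - m ≤ (k : ℕ) → A k ω = as k}

/-- Event `A̲(K−m) = a_m` (constant `a` on the last `m` coordinates). -/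
def Etr (A : Fin K → Ω → Bool) (m : ℕ) (a : Bool) : Set Ω :=
  EtrV A m (fun _ => a)

/-- Stabilized weights `W_sw`. -/
def Wsw (P : Measure Ω) (A : Fin K → Ω → Bool) (L : Fin K → Ω → 𝓛) : Ω → ℝ :=
  fun ω => ∏ k : Fin K,
    cP P {ω' | A k ω' = A k ω} (Apast A (k : ℕ) (fun j => A j ω)) /
      cP P {ω' | A k ω' = A k ω}
        (Lpast L (k : ℕ) (fun j => L j ω) ∩ Apast A (k : ℕ) (fun j => A j ω))

/-- Restricted stabilized weights `W_rsw^(m)`. -/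
def Wrsw (P : Measure Ω) (A : Fin K → Ω → Bool) (L : Fin K → Ω → 𝓛) (m : ℕ) : Ω → ℝ :=
  fun ω => ∏ k ∈ Finset.univ.filter (fun k : Fin K => K - m ≤ (k : ℕ)),
    cP P {ω' | A k ω' = A k ω} (Aseg A (K - m) (k : ℕ) (fun j => A j ω)) /
      cP P {ω' | A k ω' = A k ω}
        (Lpast L (k : ℕ) (fun j => L j ω) ∩ Apast A (k : ℕ) (fun j => A j ω))

/-- Partial stabilized weights `W_psw^(m)`. -/
def Wpsw (P : Measure Ω) (A : Fin K → Ω → Bool) (L : Fin K → Ω → 𝓛) (m : ℕ) : Ω → ℝ :=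
  fun ω => ∏ k ∈ Finset.univ.filter (fun k : Fin K => K - m ≤ (k : ℕ)),
    cP P {ω' | A k ω' = A k ω} (Apast A (k : ℕ) (fun j => A j ω)) /
      cP P {ω' | A k ω' = A k ω}
        (Lpast L (k : ℕ) (fun j => L j ω) ∩ Apast A (k : ℕ) (fun j => A j ω))

/-- IP-weighted contrast `θ_W^(m)`. -/
def θW (P : Measure Ω) (A : Fin K → Ω → Bool) (m : ℕ) (W Y : Ω → ℝ) : ℝ :=
  (∫ ω in Etr A m true, W ω * Y ω ∂P) / (∫ ω in Etr A m true, W ω ∂P) -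
    (∫ ω in Etr A m false, W ω * Y ω ∂P) / (∫ ω in Etr A m false, W ω ∂P)

/-- `rev j` is the time index `K − 1 − j`; the paper's coefficient `ψ_{j+1}`
multiplies `a(K − (j+1)) = a(rev j)`. -/
def rev (j : Fin K) : Fin K := ⟨K - 1 - (j : ℕ), by have := j.isLt; omega⟩

/-- `θ^(K) = 𝔼[Y^{1_K}] − 𝔼[Y^{0_K}]`. -/
def θKfull (P : Measure Ω) (Ypot : (Fin K → Bool) → Ω → ℝ) : ℝ :=
  (∫ ω, Ypot (fun _ => true) ω ∂P) - ∫ ω, Ypot (fun _ => false) ω ∂P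

/-- (A1) consistency. -/
def A1ok (A : Fin K → Ω → Bool) (Y : Ω → ℝ) (Ypot : (Fin K → Bool) → Ω → ℝ) : Prop :=
  ∀ (a : Fin K → Bool) (ω : Ω), (∀ k, A k ω = a k) → Y ω = Ypot a ω

/-- (A2) sequential exchangeability. -/
def A2ok (P : Measure Ω) (A : Fin K → Ω → Bool) (L : Fin K → Ω → 𝓛)
    (Ypot : (Fin K → Bool) → Ω → ℝ) : Prop :=
  ∀ (t : Fin K) (a : Fin K → Bool) (B : Set ℝ), MeasurableSet B →
    ∀ (av : Bool) (l : Fin K → 𝓛) (b : Fin K → Bool),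
      0 < P (Lpast L (t : ℕ) l ∩ Apast A (t : ℕ) b) →
      cP P ({ω | Ypot a ω ∈ B} ∩ {ω | A t ω = av}) (Lpast L (t : ℕ) l ∩ Apast A (t : ℕ) b) =
        cP P {ω | Ypot a ω ∈ B} (Lpast L (t : ℕ) l ∩ Apast A (t : ℕ) b) *
          cP P {ω | A t ω = av} (Lpast L (t : ℕ) l ∩ Apast A (t : ℕ) b)

/-- (A3) positivity. -/
def A3ok (P : Measure Ω) (A : Fin K → Ω → Bool) (L : Fin K → Ω → 𝓛) : Prop :=
  ∀ (t : Fin K) (av : Bool) (l : Fin K → 𝓛) (b : Fin K → Bool),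
    0 < P (Lpast L (t : ℕ) l ∩ Apast A (t : ℕ) b) →
    0 < cP P {ω | A t ω = av} (Lpast L (t : ℕ) l ∩ Apast A (t : ℕ) b)

/-- The marginal structural model `𝔼[Y^{ā}] = ψ₀ + Σ_{j=1}^K ψ_j a(K−j)`;
here `ψ j` is the paper's `ψ_{j+1}`, the coefficient of `a(K−1−j)`. -/
def MSMeq (P : Measure Ω) (Ypot : (Fin K → Bool) → Ω → ℝ) (ψ0 : ℝ) (ψ : Fin K → ℝ) : Prop :=
  ∀ a : Fin K → Bool,
    (∫ ω, Ypot a ω ∂P) = ψ0 + ∑ j : Fin K, ψ j * (if a (rev j) = true then 1 else 0)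

/-- (A5) conditional MSM given the past treatment history `Ā(K−m−1)`. -/
def A5ok (P : Measure Ω) (A : Fin K → Ω → Bool) (Ypot : (Fin K → Bool) → Ω → ℝ)
    (m : ℕ) : Prop :=
  ∀ b : Fin K → Bool, 0 < P (Apast A (K - m) b) →
    ∃ (φ0 : ℝ) (φ : Fin K → ℝ), ∀ a : Fin K → Bool,
      (∫ ω in Apast A (K - m) b, Ypot a ω ∂P) / (P (Apast A (K - m) b)).toReal =
        φ0 + ∑ j : Fin K, φ j * (if a (rev j) = true then 1 else 0)

/-- `q_{j+1} = P(A(K−1−j)=1 | A̲(K−m)=1_m) − P(A(K−1−j)=1 | A̲(K−m)=0_m)`. -/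
def qcoef (P : Measure Ω) (A : Fin K → Ω → Bool) (m : ℕ) (j : Fin K) : ℝ :=
  cP P {ω | A (rev j) ω = true} (Etr A m true) -
    cP P {ω | A (rev j) ω = true} (Etr A m false)

end

/-!
All variables are finitely valued, so every integral below is a finite sum over the cells
`{L̄ = g, Ā = b}`, on each of which the weights are constant. Dividing the mass of a cell by the
propensities `P(A(k) = b k | L̄(k) = g, Ā(k-1) = b)` for `k ≥ s` and summing out the covariates
`L(K-1), …, L(s)` one at a time leaves `P(Ā(s-1) = b)`: the propensity of time `k` only depends
on the history up to `k`, so it factors out of the sum over `L(k+1), …`, and (A3) makes the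
division exact. The numerators telescope: for `W_sw` and `W_psw` they turn `P(Ā(s-1) = b)` into
`P(Ā(K-1) = b)`, whose sum over the `b` ending in `a̲` is `P(A̲(K-m) = a̲)`; for `W_rsw` the
numerator is `P(A̲(K-m) = a̲)` itself and the remaining masses `P(Ā(K-m-1) = b)` sum to one.
-/

section WeightNormalization

variable {Ω : Type*} {K : ℕ}

def histEq {α : Type*} (f : Fin K → Ω → α) (t : ℕ) (v : Fin K → α) : Set Ω :=
  {ω | ∀ k : Fin K, (k : ℕ) < t → f k ω = v k}

noncomputable def extensions {α : Type*} [Fintype α] (t : ℕ) (l : Fin K → α) :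
    Finset (Fin K → α) :=
  univ.filter fun g => ∀ k : Fin K, (k : ℕ) < t → g k = l k

noncomputable def withTail (m : ℕ) (a : Fin K → Bool) : Finset (Fin K → Bool) :=
  univ.filter fun b => ∀ k : Fin K, K - m ≤ (k : ℕ) → b k = a k

theorem Apast_eq_histEq (A : Fin K → Ω → Bool) (t : ℕ) (b : Fin K → Bool) :
    Apast A t b = histEq A t b := rfl

theorem Lpast_eq_histEq {𝓛 : Type*} (L : Fin K → Ω → 𝓛) (t : ℕ) (l : Fin K → 𝓛) :
    Lpast L t l = histEq L (t + 1) l := by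
  simp only [Lpast, histEq, Nat.lt_succ_iff]

theorem histEq_zero {α : Type*} (f : Fin K → Ω → α) (v : Fin K → α) :
    histEq f 0 v = Set.univ := by
  simp [histEq]

theorem histEq_succ {α : Type*} (f : Fin K → Ω → α) (k : Fin K) (v : Fin K → α) :
    histEq f (k + 1) v = {ω | f k ω = v k} ∩ histEq f k v := by
  ext ω
  simp only [histEq, Set.mem_inter_iff, Set.mem_ofPred_eq, Nat.lt_succ_iff_lt_or_eq,
    or_imp, forall_and, Fin.val_inj, forall_eq, and_comm]

theorem histEq_congr {α : Type*} (f : Fin K → Ω → α) {t : ℕ} {v w : Fin K → α}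
    (h : ∀ k : Fin K, (k : ℕ) < t → v k = w k) : histEq f t v = histEq f t w := by
  ext ω
  simp only [histEq, Set.mem_ofPred_eq]
  exact forall₂_congr fun k hk => by rw [h k hk]

theorem Apast_eq_preimage (A : Fin K → Ω → Bool) (b : Fin K → Bool) :
    Apast A K b = (fun ω k => A k ω) ⁻¹' {b} := by
  ext ω
  simp [Apast, funext_iff]

theorem EtrV_eq_preimage (A : Fin K → Ω → Bool) (m : ℕ) (a : Fin K → Bool) :
    EtrV A m a = (fun ω k => A k ω) ⁻¹' withTail m a := by
  ext ω
  simp [EtrV, withTail]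

theorem Aseg_succ (A : Fin K → Ω → Bool) {s : ℕ} (k : Fin K) (hk : s ≤ (k : ℕ))
    (b : Fin K → Bool) : {ω | A k ω = b k} ∩ Aseg A s k b = Aseg A s (k + 1) b := by
  ext ω
  simp only [Aseg, Set.mem_inter_iff, Set.mem_ofPred_eq, Nat.lt_succ_iff_lt_or_eq, or_imp,
    forall_and, Fin.val_inj]
  exact ⟨fun ⟨h1, h2⟩ => ⟨h2, fun j _ hj => hj ▸ h1⟩, fun ⟨h2, h1⟩ => ⟨h1 k hk rfl, h2⟩⟩

theorem Aseg_eq_EtrV (A : Fin K → Ω → Bool) {m : ℕ} {a b : Fin K → Bool}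
    (hb : b ∈ withTail m a) : Aseg A (K - m) K b = EtrV A m a := by
  ext ω
  simp only [Aseg, EtrV, Set.mem_ofPred_eq, Fin.is_lt, forall_const]
  exact forall₂_congr fun k hk => by rw [(mem_filter.1 hb).2 k hk]

theorem prod_filter_le_eq_mul {M : Type*} [CommMonoid M] (k : Fin K) (f : Fin K → M) :
    ∏ j ∈ univ.filter (fun j : Fin K => (k : ℕ) ≤ j), f j =
      f k * ∏ j ∈ univ.filter (fun j : Fin K => (k : ℕ) + 1 ≤ j), f j := by
  rw [← prod_insert (by simp)]
  congr 1
  ext j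
  simp [Nat.le_iff_lt_or_eq, Fin.ext_iff, eq_comm, or_comm]

theorem filter_le_eq_empty {s : ℕ} (hs : K ≤ s) :
    (univ.filter fun j : Fin K => s ≤ (j : ℕ)) = ∅ := by
  ext j
  simp only [mem_filter, mem_univ, true_and, notMem_empty, iff_false, not_le]
  exact j.isLt.trans_le hs

theorem sum_extensions_succ {α M : Type*} [Fintype α] [AddCommMonoid M] (k : Fin K)
    (l : Fin K → α) (F : (Fin K → α) → M) :
    ∑ g ∈ extensions k l, F g =
      ∑ x, ∑ g ∈ extensions (k + 1) (Function.update l k x), F g := by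
  rw [← sum_fiberwise (extensions k l) (fun g => g k) F]
  refine sum_congr rfl fun x _ => sum_congr ?_ fun _ _ => rfl
  ext g
  simp only [extensions, mem_filter, mem_univ, true_and, Nat.lt_succ_iff_lt_or_eq, or_imp,
    forall_and, Fin.val_inj, forall_eq, Function.update_self]
  refine and_congr_left fun _ => forall₂_congr fun j hj => ?_
  rw [Function.update_of_ne (Fin.ne_of_lt hj)]

section Measure

variable [MeasurableSpace Ω] (P : Measure Ω) [IsFiniteMeasure P]

theorem measureReal_mul_cP (B F : Set Ω) : P.real F * cP P B F = P.real (B ∩ F) := by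
  rcases eq_or_ne (P.real F) 0 with hF | hF
  · rw [hF, measureReal_mono_null Set.inter_subset_right hF, zero_mul]
  · exact mul_div_cancel₀ _ hF

theorem measureReal_inter_div_cP {B F : Set Ω} (h : 0 < P F → 0 < cP P B F) :
    P.real (B ∩ F) / cP P B F = P.real F := by
  rcases eq_or_ne (P F) 0 with hF | hF
  · simp [Measure.real, hF, measure_mono_null Set.inter_subset_right hF]
  · rw [← measureReal_mul_cP, mul_div_cancel_right₀ _ (h (pos_iff_ne_zero.2 hF)).ne']

theorem prod_cP_mul_measureReal (E : ℕ → Set Ω) (B : Fin K → Set Ω) {s : ℕ} (hs : s ≤ K)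
    (hE : ∀ k : Fin K, s ≤ (k : ℕ) → B k ∩ E k = E (k + 1)) :
    (∏ k ∈ univ.filter (fun k : Fin K => s ≤ (k : ℕ)), cP P (B k) (E k)) * P.real (E s) =
      P.real (E K) := by
  induction hs using Nat.decreasingInduction with
  | self => rw [filter_le_eq_empty le_rfl, prod_empty, one_mul]
  | of_succ s hs ih =>
    rw [prod_filter_le_eq_mul ⟨s, hs⟩, mul_comm, ← mul_assoc, measureReal_mul_cP,
      hE ⟨s, hs⟩ le_rfl, mul_comm]
    exact ih fun k hk => hE k (by omega)

theorem sum_measureReal_histEq_update {α : Type*} [Fintype α] [MeasurableSpace α]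
    [MeasurableSingletonClass α] {f : Fin K → Ω → α} (hf : ∀ k, Measurable (f k)) (k : Fin K)
    (l : Fin K → α) (E : Set Ω) :
    ∑ x, P.real (histEq f (k + 1) (Function.update l k x) ∩ E) = P.real (histEq f k l ∩ E) := by
  have hfiber : ∀ x, histEq f (k + 1) (Function.update l k x) ∩ E =
      f k ⁻¹' {x} ∩ (histEq f k l ∩ E) := fun x => by
    rw [histEq_succ, Function.update_self, histEq_congr f fun j hj =>
      Function.update_of_ne (Fin.ne_of_lt hj) x l, Set.inter_assoc]
    rfl
  simp_rw [hfiber, ← measureReal_restrict_apply (hf k (measurableSet_singleton _))]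
  rw [sum_measureReal_preimage_singleton _ fun x _ => hf k (measurableSet_singleton x),
    coe_univ, Set.preimage_univ, measureReal_restrict_apply_univ]

theorem sum_measureReal_Apast_withTail {A : Fin K → Ω → Bool} (hA : ∀ k, Measurable (A k))
    (m : ℕ) (a : Fin K → Bool) :
    ∑ b ∈ withTail m a, P.real (Apast A K b) = P.real (EtrV A m a) := by
  simp_rw [Apast_eq_preimage, EtrV_eq_preimage]
  exact sum_measureReal_preimage_singleton _ fun b _ =>
    measurable_pi_lambda _ hA (measurableSet_singleton b)

theorem sum_measureReal_Apast_sub_withTail_eq_one [IsProbabilityMeasure P]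
    {A : Fin K → Ω → Bool} (hA : ∀ k, Measurable (A k)) (m : ℕ) (a : Fin K → Bool) :
    ∑ b ∈ withTail m a, P.real (Apast A (K - m) b) = 1 := by
  set ρ : (Fin K → Bool) → Fin K → Bool := fun b k => if (k : ℕ) < K - m then b k else a k
  have hρ : Measurable fun ω => ρ fun k => A k ω :=
    (Measurable.of_discrete (f := ρ)).comp (measurable_pi_lambda _ hA)
  have hfiber : ∀ b ∈ withTail m a,
      Apast A (K - m) b = (fun ω => ρ fun k => A k ω) ⁻¹' {b} := by
    intro b hb
    ext ω
    simp only [Apast, Set.mem_ofPred_eq, Set.mem_preimage, Set.mem_singleton_iff, funext_iff, ρ]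
    refine forall_congr' fun k => ?_
    split_ifs with hk
    · simp [hk]
    · simp [hk, (mem_filter.1 hb).2 k (not_lt.1 hk)]
  have hcover : (fun ω => ρ fun k => A k ω) ⁻¹' withTail m a = Set.univ := by
    ext ω
    simp only [withTail, coe_filter, mem_univ, true_and, Set.mem_preimage, Set.mem_ofPred_eq,
      Set.mem_univ, iff_true, ρ]
    intro k hk
    simp [not_lt.2 hk]
  rw [sum_congr rfl fun b hb => congrArg P.real (hfiber b hb),
    sum_measureReal_preimage_singleton _ fun b _ => hρ (measurableSet_singleton b), hcover,
    probReal_univ]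

theorem setIntegral_preimage_eq_sum {β : Type*} [Fintype β] [MeasurableSpace β]
    [MeasurableSingletonClass β] {H : Ω → β} (hH : Measurable H) (S : Finset β) (w : β → ℝ) :
    ∫ ω in H ⁻¹' S, w (H ω) ∂P = ∑ y ∈ S, w y * P.real (H ⁻¹' {y}) := by
  rw [← setIntegral_map S.measurableSet Measurable.of_discrete.aestronglyMeasurable
    hH.aemeasurable, setIntegral_finset S Integrable.of_finite.integrableOn]
  refine sum_congr rfl fun y _ => ?_
  rw [smul_eq_mul, mul_comm, map_measureReal_apply hH (measurableSet_singleton y)]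

end Measure

section Weights

variable {𝓛 : Type*} [MeasurableSpace Ω] (P : Measure Ω) (A : Fin K → Ω → Bool)
  (L : Fin K → Ω → 𝓛)

noncomputable def propensity (k : Fin K) (g : Fin K → 𝓛) (b : Fin K → Bool) : ℝ :=
  cP P {ω | A k ω = b k} (Lpast L k g ∩ Apast A k b)

theorem propensity_congr [Fintype 𝓛] {k : Fin K} {g l : Fin K → 𝓛} (b : Fin K → Bool)
    (hg : g ∈ extensions (k + 1) l) : propensity P A L k g b = propensity P A L k l b := by
  simp only [propensity, Lpast_eq_histEq, histEq_congr L (mem_filter.1 hg).2]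

theorem Wsw_eq (ω : Ω) :
    Wsw P A L ω =
      (∏ k ∈ univ.filter (fun k : Fin K => 0 ≤ (k : ℕ)),
        cP P {ω' | A k ω' = A k ω} (Apast A k fun j => A j ω)) /
      ∏ k ∈ univ.filter (fun k : Fin K => 0 ≤ (k : ℕ)),
        propensity P A L k (fun j => L j ω) (fun j => A j ω) := by
  simp only [Nat.zero_le, filter_true, ← prod_div_distrib]
  rfl

theorem Wrsw_eq (m : ℕ) (ω : Ω) :
    Wrsw P A L m ω =
      (∏ k ∈ univ.filter (fun k : Fin K => K - m ≤ (k : ℕ)),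
        cP P {ω' | A k ω' = A k ω} (Aseg A (K - m) k fun j => A j ω)) /
      ∏ k ∈ univ.filter (fun k : Fin K => K - m ≤ (k : ℕ)),
        propensity P A L k (fun j => L j ω) (fun j => A j ω) :=
  prod_div_distrib _ _

theorem Wpsw_eq (m : ℕ) (ω : Ω) :
    Wpsw P A L m ω =
      (∏ k ∈ univ.filter (fun k : Fin K => K - m ≤ (k : ℕ)),
        cP P {ω' | A k ω' = A k ω} (Apast A k fun j => A j ω)) /
      ∏ k ∈ univ.filter (fun k : Fin K => K - m ≤ (k : ℕ)),
        propensity P A L k (fun j => L j ω) (fun j => A j ω) :=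
  prod_div_distrib _ _

theorem prod_cP_Apast_mul [IsFiniteMeasure P] (b : Fin K → Bool) {s : ℕ} (hs : s ≤ K) :
    (∏ k ∈ univ.filter (fun k : Fin K => s ≤ (k : ℕ)), cP P {ω | A k ω = b k} (Apast A k b)) *
      P.real (Apast A s b) = P.real (Apast A K b) :=
  prod_cP_mul_measureReal P (fun t => Apast A t b) _ hs fun k _ => (histEq_succ A k b).symm

theorem prod_cP_Aseg [IsProbabilityMeasure P] (b : Fin K → Bool) {s : ℕ} (hs : s ≤ K) :
    ∏ k ∈ univ.filter (fun k : Fin K => s ≤ (k : ℕ)), cP P {ω | A k ω = b k} (Aseg A s k b) =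
      P.real (Aseg A s K b) := by
  have hempty : Aseg A s s b = Set.univ := by
    ext ω
    simp only [Aseg, Set.mem_ofPred_eq, Set.mem_univ, iff_true]
    exact fun k hsk hks => absurd hsk (not_le.2 hks)
  simpa [hempty] using prod_cP_mul_measureReal P (fun t => Aseg A s t b) _ hs (Aseg_succ A · · b)

variable [Fintype 𝓛] [MeasurableSpace 𝓛] [MeasurableSingletonClass 𝓛] [IsFiniteMeasure P]
  {A L}

theorem sum_extensions_div_prod_propensity (hL : ∀ k, Measurable (L k)) (hA3 : A3ok P A L)
    (b : Fin K → Bool) {t s : ℕ} (hts : t ≤ s) (hsK : s ≤ K) (l : Fin K → 𝓛) :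
    ∑ g ∈ extensions t l, P.real (histEq L K g ∩ Apast A K b) /
        ∏ k ∈ univ.filter (fun k : Fin K => s ≤ (k : ℕ)), propensity P A L k g b =
      P.real (histEq L t l ∩ Apast A s b) := by
  induction (hts.trans hsK) using Nat.decreasingInduction generalizing s l with
  | self =>
    obtain rfl := le_antisymm hts hsK
    have hext : extensions K l = {l} := by
      ext g
      simp only [extensions, mem_filter, mem_univ, true_and, mem_singleton, funext_iff]
      exact forall_congr' fun k => imp_iff_right k.isLt
    rw [hext, sum_singleton, filter_le_eq_empty le_rfl, prod_empty, div_one]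
  | of_succ t ht ih =>
    set k : Fin K := ⟨t, ht⟩
    rw [sum_extensions_succ k]
    refine (sum_congr rfl fun x _ => ?_).trans (sum_measureReal_histEq_update P hL k l _)
    generalize Function.update l k x = l'
    rcases hts.eq_or_lt with rfl | hts
    · have hcell : histEq L (t + 1) l' ∩ Apast A (t + 1) b =
          {ω | A k ω = b k} ∩ (Lpast L k l' ∩ Apast A k b) := by
        rw [Lpast_eq_histEq, Apast_eq_histEq, Apast_eq_histEq, histEq_succ A k,
          Set.inter_left_comm]
      calc
        _ = ∑ g ∈ extensions (t + 1) l', P.real (histEq L K g ∩ Apast A K b) /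
              (∏ k ∈ univ.filter (fun k : Fin K => t + 1 ≤ (k : ℕ)), propensity P A L k g b) /
              propensity P A L k l' b :=
          sum_congr rfl fun g hg => by
            rw [prod_filter_le_eq_mul k, propensity_congr P A L b hg, mul_comm, div_div]
        _ = P.real (histEq L (t + 1) l' ∩ Apast A (t + 1) b) / propensity P A L k l' b := by
          rw [← sum_div, ih le_rfl ht]
        _ = P.real (histEq L (t + 1) l' ∩ Apast A t b) := by
          rw [hcell, propensity, measureReal_inter_div_cP P (hA3 k (b k) l' b),
            Lpast_eq_histEq]
    · exact ih hts hsK l'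

theorem sum_div_prod_propensity (hL : ∀ k, Measurable (L k)) (hA3 : A3ok P A L)
    (b : Fin K → Bool) {s : ℕ} (hsK : s ≤ K) :
    ∑ g, P.real (histEq L K g ∩ Apast A K b) /
        ∏ k ∈ univ.filter (fun k : Fin K => s ≤ (k : ℕ)), propensity P A L k g b =
      P.real (Apast A s b) := by
  rcases isEmpty_or_nonempty (Fin K → 𝓛) with _ | ⟨⟨l⟩⟩
  · have : IsEmpty Ω := ⟨fun ω => IsEmpty.false fun j => L j ω⟩
    simp [Set.eq_empty_of_isEmpty]
  · have hext : extensions 0 l = univ := by simp [extensions]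
    rw [← hext, sum_extensions_div_prod_propensity P hL hA3 b (Nat.zero_le s) hsK,
      histEq_zero, Set.univ_inter]

theorem setIntegral_EtrV_div_prod_propensity (hA : ∀ k, Measurable (A k))
    (hL : ∀ k, Measurable (L k)) (hA3 : A3ok P A L) (N : (Fin K → Bool) → ℝ) {s : ℕ}
    (hs : s ≤ K) (m : ℕ) (a : Fin K → Bool) :
    ∫ ω in EtrV A m a, N (fun k => A k ω) /
        ∏ k ∈ univ.filter (fun k : Fin K => s ≤ (k : ℕ)),
          propensity P A L k (fun j => L j ω) (fun j => A j ω) ∂P =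
      ∑ b ∈ withTail m a, N b * P.real (Apast A s b) := by
  set H : Ω → (Fin K → Bool) × (Fin K → 𝓛) := fun ω => (fun k => A k ω, fun k => L k ω)
  have hH : Measurable H := (measurable_pi_lambda _ hA).prodMk (measurable_pi_lambda _ hL)
  have hcell : ∀ b g, H ⁻¹' {(b, g)} = histEq L K g ∩ Apast A K b := fun b g => by
    ext ω
    simp [H, histEq, Apast, funext_iff, and_comm]
  have hEtrV : EtrV A m a = H ⁻¹' ↑(withTail m a ×ˢ (univ : Finset (Fin K → 𝓛))) := by
    ext ω
    simp [H, EtrV_eq_preimage]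
  rw [hEtrV, setIntegral_preimage_eq_sum P hH _ fun y => N y.1 /
      ∏ k ∈ univ.filter (fun k : Fin K => s ≤ (k : ℕ)), propensity P A L k y.2 y.1,
    sum_product]
  refine sum_congr rfl fun b _ => ?_
  rw [← sum_div_prod_propensity P hL hA3 b hs, mul_sum]
  refine sum_congr rfl fun g _ => ?_
  rw [hcell, mul_div_assoc', div_mul_eq_mul_div]

end Weights

end WeightNormalization

theorem weight_normalization_general
    {Ω : Type*} [MeasurableSpace Ω] {𝓛 : Type*} [MeasurableSpace 𝓛]
    [Fintype 𝓛] [MeasurableSingletonClass 𝓛]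
    (P : Measure Ω) [IsProbabilityMeasure P]
    {K m : ℕ}
    (A : Fin K → Ω → Bool) (L : Fin K → Ω → 𝓛)
    (hA : ∀ k, Measurable (A k)) (hL : ∀ k, Measurable (L k))
    (hA3 : A3ok P A L) :
    ∀ as : Fin K → Bool,
      (∫ ω in EtrV A m as, Wsw P A L ω ∂P) = (P (EtrV A m as)).toReal ∧
      (∫ ω in EtrV A m as, Wrsw P A L m ω ∂P) = (P (EtrV A m as)).toReal ∧
      (∫ ω in EtrV A m as, Wpsw P A L m ω ∂P) = (P (EtrV A m as)).toReal := by
  intro as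
  refine ⟨?_, ?_, ?_⟩
  · simp_rw [Wsw_eq]
    rw [setIntegral_EtrV_div_prod_propensity P hA hL hA3 (fun b => ∏ k ∈ univ.filter
        (fun k : Fin K => 0 ≤ (k : ℕ)), cP P {ω | A k ω = b k} (Apast A k b)) (Nat.zero_le K),
      sum_congr rfl fun b _ => prod_cP_Apast_mul P A b (Nat.zero_le K)]
    exact sum_measureReal_Apast_withTail P hA m as
  · simp_rw [Wrsw_eq]
    rw [setIntegral_EtrV_div_prod_propensity P hA hL hA3 (fun b => ∏ k ∈ univ.filter
        (fun k : Fin K => K - m ≤ (k : ℕ)), cP P {ω | A k ω = b k} (Aseg A (K - m) k b))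
        (Nat.sub_le K m),
      sum_congr rfl fun b hb => by rw [prod_cP_Aseg P A b (Nat.sub_le K m), Aseg_eq_EtrV A hb],
      ← mul_sum, sum_measureReal_Apast_sub_withTail_eq_one P hA, mul_one]
    rfl
  · simp_rw [Wpsw_eq]
    rw [setIntegral_EtrV_div_prod_propensity P hA hL hA3 (fun b => ∏ k ∈ univ.filter
        (fun k : Fin K => K - m ≤ (k : ℕ)), cP P {ω | A k ω = b k} (Apast A k b))
        (Nat.sub_le K m),
      sum_congr rfl fun b _ => prod_cP_Apast_mul P A b (Nat.sub_le K m)]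
    exact sum_measureReal_Apast_withTail P hA m as

/-- Weight normalization: under (A3), `𝔼[1{A̲(K−m)=a̲} W] = P(A̲(K−m)=a̲)`
for each of the three IP-weights. -/
theorem weight_normalization
    {Ω : Type*} [MeasurableSpace Ω] {𝓛 : Type*} [MeasurableSpace 𝓛]
    [Fintype 𝓛] [Nonempty 𝓛] [MeasurableSingletonClass 𝓛]
    (P : Measure Ω) [IsProbabilityMeasure P]
    {K m : ℕ} (hK : 1 ≤ K) (hm1 : 1 ≤ m) (hmK : m ≤ K)
    (A : Fin K → Ω → Bool) (L : Fin K → Ω → 𝓛)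
    (hA : ∀ k, Measurable (A k)) (hL : ∀ k, Measurable (L k))
    (hA3 : A3ok P A L) :
    ∀ as : Fin K → Bool,
      (∫ ω in EtrV A m as, Wsw P A L ω ∂P) = (P (EtrV A m as)).toReal ∧
      (∫ ω in EtrV A m as, Wrsw P A L m ω ∂P) = (P (EtrV A m as)).toReal ∧
      (∫ ω in EtrV A m as, Wpsw P A L m ω ∂P) = (P (EtrV A m as)).toReal :=
  weight_normalization_general P A L hA hL hA3

end MSMPaper
end

section
/- IP-weighted identification for history-restricted marginal structural models (equation (B.3.2)): Assume (A1′)–(A3′). Then for every a̲ ∈ {0,1}^m: 𝔼[1{A̲(K−m)=a̲} · W_rsw^(m) · Y] = P(A̲(K−m)=a̲) · 𝔼[Y^{a̲}]; consequently, if P(A̲(K−m)=1_m) > 0 and P(A̲(K−m)=0_m) > 0, then θ_rsw^(m) = θ^(m). -/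
/-!
On the event `A̲(K−m) = a̲` the numerator of `W_rsw^(m)` is, by the chain rule, the product of
the sequential conditional probabilities of `a̲`, i.e. `P(A̲(K−m) = a̲)`, while the denominator is
the product of the propensities `P(A(t) = a(t) | L̄(t), Ā(t−1))`. The treatments at times
`K−1, …, K−m` are then integrated out one at a time, atom by atom of the observed history
`(L̄(t), Ā(t−1))`: by exchangeability the mean of `Y^{a̲}` on `{A(t) = a(t)}` within an atom is its
mean on the whole atom, so the indicator contributes exactly the propensity it is divided by
(positivity makes the division harmless). What remains is `P(A̲(K−m) = a̲) 𝔼[Y^{a̲}]`, and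
consistency lets `Y` replace `Y^{a̲}` on the event. For `Y ≡ 1` the same computation gives
`𝔼[1{A̲(K−m) = a̲} W_rsw^(m)] = P(A̲(K−m) = a̲)`, so the two ratios in `θ_rsw^(m)` are
`𝔼[Y^{1_m}]` and `𝔼[Y^{0_m}]`.
-/

open MeasureTheory Finset
open scoped Classical

namespace MSMPaper

noncomputable section

variable {Ω : Type*} [MeasurableSpace Ω] {𝓛 : Type*} {K : ℕ}

/-- `Y^{a̲}(ω) = Y^{(Ā(K−m−1)(ω), a̲)}(ω)`: the potential outcome under the regime that
follows the observed history before time `K−m` and the regime `as` afterwards. -/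
def Ypotm (A : Fin K → Ω → Bool) (m : ℕ) (Ypot : (Fin K → Bool) → Ω → ℝ)
    (as : Fin K → Bool) : Ω → ℝ :=
  fun ω => Ypot (fun k => if (k : ℕ) < K - m then A k ω else as k) ω

end

section WeightedFibers

variable {Ω α β γ ι : Type*} [MeasurableSpace Ω] {P : Measure Ω}

lemma cP_nonneg (P : Measure Ω) (E F : Set Ω) : 0 ≤ cP P E F := by
  unfold cP; positivity

lemma cP_mul_toReal [IsFiniteMeasure P] (E F : Set Ω) :
    cP P E F * (P F).toReal = (P (E ∩ F)).toReal := by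
  rcases eq_or_ne (P F) 0 with hF | hF
  · simp [cP, hF, measure_mono_null Set.inter_subset_right hF]
  · exact div_mul_cancel₀ _ (ENNReal.toReal_pos hF (measure_ne_top P F)).ne'

lemma setIntegral_inter_eq_cP_mul [IsFiniteMeasure P] {u : Ω → ℝ} (hu : AEMeasurable u P)
    {E F : Set Ω} (hE : MeasurableSet E) (hF : MeasurableSet F)
    (hindep : ∀ B : Set ℝ, MeasurableSet B →
      cP P ({ω | u ω ∈ B} ∩ E) F = cP P {ω | u ω ∈ B} F * cP P E F) :
    ∫ ω in E ∩ F, u ω ∂P = cP P E F * ∫ ω in F, u ω ∂P := by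
  have hmap : (P.restrict (E ∩ F)).map u = ENNReal.ofReal (cP P E F) • (P.restrict F).map u := by
    ext B hB
    rw [Measure.smul_apply, Measure.map_apply_of_aemeasurable hu.restrict hB,
      Measure.map_apply_of_aemeasurable hu.restrict hB, Measure.restrict_apply' (hE.inter hF),
      Measure.restrict_apply' hF, smul_eq_mul,
      ← ENNReal.ofReal_toReal (measure_ne_top P (u ⁻¹' B ∩ (E ∩ F))),
      ← ENNReal.ofReal_toReal (measure_ne_top P (u ⁻¹' B ∩ F)),
      ← ENNReal.ofReal_mul (cP_nonneg P E F), ← Set.inter_assoc, ← cP_mul_toReal,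
      ← cP_mul_toReal]
    congr 1
    rw [Set.preimage, hindep B hB]
    ring
  calc ∫ ω in E ∩ F, u ω ∂P = ∫ y, y ∂(P.restrict (E ∩ F)).map u :=
        (integral_map hu.restrict aestronglyMeasurable_id).symm
    _ = cP P E F * ∫ ω in F, u ω ∂P := by
        rw [hmap, integral_smul_measure, ENNReal.toReal_ofReal (cP_nonneg P E F), smul_eq_mul]
        exact congrArg _ (integral_map hu.restrict aestronglyMeasurable_id)

def CondMeanIndep (P : Measure Ω) (u : Ω → ℝ) (E : Set Ω) (X : Ω → β) : Prop :=
  ∀ x, 0 < P (X ⁻¹' {x}) →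
    ∫ ω in E ∩ X ⁻¹' {x}, u ω ∂P = cP P E (X ⁻¹' {x}) * ∫ ω in X ⁻¹' {x}, u ω ∂P

lemma condMeanIndep_const [IsFiniteMeasure P] (c : ℝ) (E : Set Ω) (X : Ω → β) :
    CondMeanIndep P (fun _ => c) E X := by
  intro x _
  rw [setIntegral_const, setIntegral_const, measureReal_def, measureReal_def, smul_eq_mul,
    smul_eq_mul, ← cP_mul_toReal]
  ring

noncomputable def ipWeight (P : Measure Ω) (X : Ω → β) (E : Set Ω) : Ω → ℝ :=
  E.indicator fun ω => (cP P E (X ⁻¹' {X ω}))⁻¹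

lemma ipWeight_factorsThrough {Z : Ω → γ} {X : Ω → β} {E : Set Ω} (hX : X.FactorsThrough Z)
    (hE : (· ∈ E).FactorsThrough Z) : (ipWeight P X E).FactorsThrough Z := by
  intro ω ω' h
  simp only [ipWeight, Set.indicator_apply, hX h, hE h]

lemma integral_comp_mul_eq_sum [Fintype β] {X : Ω → β} (hX : ∀ x, MeasurableSet (X ⁻¹' {x}))
    (φ : β → ℝ) {v : Ω → ℝ} (hv : Integrable v P) :
    ∫ ω, φ (X ω) * v ω ∂P = ∑ x, φ x * ∫ ω in X ⁻¹' {x}, v ω ∂P := by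
  have hsplit : ∀ ω, φ (X ω) * v ω = ∑ x, (X ⁻¹' {x}).indicator (fun ω => φ x * v ω) ω := by
    intro ω
    rw [Finset.sum_eq_single (X ω)
      (fun x _ hx => Set.indicator_of_notMem (s := X ⁻¹' {x}) (Ne.symm hx) _) (by simp)]
    simp
  simp_rw [hsplit]
  rw [integral_finsetSum _ fun x _ => (hv.const_mul _).indicator (hX x)]
  simp_rw [integral_indicator (hX _), integral_const_mul]

/-- On each atom of `X`, `hci` turns the integral over `E` into `P(E | X)` times the integral over
the atom, and the weight cancels that factor. -/
lemma integral_mul_ipWeight_mul [IsFiniteMeasure P] [Fintype β] {X : Ω → β}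
    (hX : ∀ x, MeasurableSet (X ⁻¹' {x})) {E : Set Ω} (hE : MeasurableSet E) {g u : Ω → ℝ}
    (hg : g.FactorsThrough X) (hu : Integrable u P) (hci : CondMeanIndep P u E X)
    (hpos : ∀ x, 0 < P (X ⁻¹' {x}) → 0 < cP P E (X ⁻¹' {x})) :
    ∫ ω, g ω * ipWeight P X E ω * u ω ∂P = ∫ ω, g ω * u ω ∂P := by
  set φ := Function.extend X g 0
  have hφ : ∀ ω, g ω = φ (X ω) := fun ω => (hg.extend_apply 0 ω).symm
  have hweight : ∀ ω, g ω * ipWeight P X E ω * u ω =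
      φ (X ω) * (cP P E (X ⁻¹' {X ω}))⁻¹ * E.indicator u ω := by
    intro ω
    by_cases hω : ω ∈ E <;> simp [ipWeight, hω, hφ]
  simp_rw [hweight, hφ]
  rw [integral_comp_mul_eq_sum hX (fun x => φ x * (cP P E (X ⁻¹' {x}))⁻¹) (hu.indicator hE),
    integral_comp_mul_eq_sum hX φ hu]
  refine Finset.sum_congr rfl fun x _ => ?_
  rw [setIntegral_indicator hE, Set.inter_comm]
  rcases eq_zero_or_pos (P (X ⁻¹' {x})) with hnull | hpos'
  · simp [Measure.restrict_eq_zero.2 hnull,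
      Measure.restrict_eq_zero.2 (measure_mono_null Set.inter_subset_right hnull)]
  · rw [hci x hpos']
    field_simp [(hpos x hpos').ne']

theorem integral_prod_ipWeight_mul [IsFiniteMeasure P] [Fintype β] [LinearOrder ι]
    {X : ι → Ω → β} {E : ι → Set Ω} (hX : ∀ k x, MeasurableSet (X k ⁻¹' {x}))
    (hE : ∀ k, MeasurableSet (E k)) (hXadapt : ∀ ⦃j k⦄, j < k → (X j).FactorsThrough (X k))
    (hEadapt : ∀ ⦃j k⦄, j < k → (· ∈ E j).FactorsThrough (X k))
    {u : Ω → ℝ} (hu : Integrable u P) (s : Finset ι)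
    (hci : ∀ k ∈ s, CondMeanIndep P u (E k) (X k))
    (hpos : ∀ k ∈ s, ∀ x, 0 < P (X k ⁻¹' {x}) → 0 < cP P (E k) (X k ⁻¹' {x})) :
    ∫ ω, (∏ k ∈ s, ipWeight P (X k) (E k) ω) * u ω ∂P = ∫ ω, u ω ∂P := by
  induction s using Finset.induction_on_max with
  | empty => simp
  | insert a s hlt ih =>
    have hfactor : (fun ω => ∏ k ∈ s, ipWeight P (X k) (E k) ω).FactorsThrough (X a) :=
      fun ω ω' h => Finset.prod_congr rfl fun k hk =>
        ipWeight_factorsThrough (hXadapt (hlt k hk)) (hEadapt (hlt k hk)) h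
    have ha : a ∉ s := fun h => lt_irrefl a (hlt a h)
    simp_rw [Finset.prod_insert ha, mul_comm (ipWeight P (X a) (E a) _)]
    rw [integral_mul_ipWeight_mul (hX a) (hE a) hfactor hu (hci a (mem_insert_self a s))
      (hpos a (mem_insert_self a s))]
    exact ih (fun k hk => hci k (mem_insert_of_mem hk)) fun k hk => hpos k (mem_insert_of_mem hk)

theorem toReal_measure_biInter_eq_prod_cP [IsProbabilityMeasure P] [LinearOrder ι]
    (E : ι → Set Ω) (s : Finset ι) :
    (P (⋂ k ∈ s, E k)).toReal = ∏ k ∈ s, cP P (E k) (⋂ j ∈ s.filter (· < k), E j) := by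
  induction s using Finset.induction_on_max with
  | empty => simp
  | insert a s hlt ih =>
    have ha : a ∉ s := fun h => lt_irrefl a (hlt a h)
    have hbelow : ∀ k ∈ s, (insert a s).filter (· < k) = s.filter (· < k) := fun k hk => by
      rw [filter_insert, if_neg (hlt k hk).asymm]
    rw [Finset.set_biInter_insert, Finset.prod_insert ha, prod_congr rfl fun k hk => by
      rw [hbelow k hk], ← ih, filter_insert, if_neg (lt_irrefl a),
      filter_true_of_mem hlt, cP_mul_toReal]

lemma integrable_select_of_fintype [Fintype α] [MeasurableSpace α] [MeasurableSingletonClass α]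
    {r : Ω → α} (hr : Measurable r) {F : α → Ω → ℝ} (hF : ∀ a, Integrable (F a) P) :
    Integrable (fun ω => F (r ω) ω) P := by
  have hsplit : (fun ω => F (r ω) ω) = fun ω => ∑ a, (r ⁻¹' {a}).indicator (F a) ω := by
    funext ω
    rw [Finset.sum_eq_single (r ω) (fun a _ ha => Set.indicator_of_notMem (s := r ⁻¹' {a})
      (Ne.symm ha) _) (by simp)]
    simp
  rw [hsplit]
  exact integrable_finsetSum _ fun a _ => (hF a).indicator (hr (measurableSet_singleton a))

end WeightedFibers

section History

variable {Ω : Type*} {𝓛 : Type*} {K : ℕ}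

/-- `none` marks the coordinates not yet observed at time `t`, so that the fibres of `hist L A t`
are exactly the atoms `Lpast L t l ∩ Apast A t b`. -/
def hist (L : Fin K → Ω → 𝓛) (A : Fin K → Ω → Bool) (t : ℕ) (ω : Ω) :
    (Fin K → Option 𝓛) × (Fin K → Option Bool) :=
  (fun k => if (k : ℕ) ≤ t then some (L k ω) else none,
    fun k => if (k : ℕ) < t then some (A k ω) else none)

variable {L : Fin K → Ω → 𝓛} {A : Fin K → Ω → Bool}

lemma hist_preimage_hist (t : ℕ) (ω : Ω) :
    hist L A t ⁻¹' {hist L A t ω} = Lpast L t (fun k => L k ω) ∩ Apast A t (fun k => A k ω) := by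
  ext ω'
  simp only [Set.mem_preimage, Set.mem_singleton_iff, hist, Prod.mk.injEq, funext_iff,
    Set.mem_inter_iff, Lpast, Apast, Set.mem_ofPred_eq]
  refine and_congr (forall_congr' fun k => ?_) (forall_congr' fun k => ?_) <;>
    split_ifs <;> simp [*]

lemma forall_hist_preimage {t : ℕ} {p : Set Ω → Prop} (hempty : p ∅)
    (hatom : ∀ l b, p (Lpast L t l ∩ Apast A t b)) (x) : p (hist L A t ⁻¹' {x}) := by
  by_cases hx : ∃ ω, hist L A t ω = x
  · obtain ⟨ω, rfl⟩ := hx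
    rw [hist_preimage_hist]
    exact hatom _ _
  · rwa [Set.preimage_singleton_eq_empty.2 fun h => hx h]

lemma hist_factorsThrough {s t : ℕ} (hst : s ≤ t) : (hist L A s).FactorsThrough (hist L A t) := by
  intro ω ω' h
  simp only [hist, Prod.mk.injEq, funext_iff] at h ⊢
  refine ⟨fun k => ?_, fun k => ?_⟩
  · have := h.1 k; split_ifs at this ⊢ <;> first | rfl | omega
  · have := h.2 k; split_ifs at this ⊢ <;> first | rfl | omega

lemma apply_factorsThrough_hist {k : Fin K} {t : ℕ} (hk : (k : ℕ) < t) :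
    (A k).FactorsThrough (hist L A t) := by
  intro ω ω' h
  simpa [hist, hk] using congrFun (congrArg Prod.snd h) k

lemma Aseg_eq_of_mem_EtrV {m : ℕ} {as : Fin K → Bool} {ω : Ω} (hω : ω ∈ EtrV A m as) (t : ℕ) :
    Aseg A (K - m) t (fun k => A k ω) = Aseg A (K - m) t as := by
  ext ω'
  simp only [Aseg, Set.mem_ofPred_eq]
  exact forall_congr' fun k => imp_congr_right fun hk => by rw [hω k hk]

variable [MeasurableSpace Ω] [MeasurableSpace 𝓛] [MeasurableSingletonClass 𝓛]

lemma measurableSet_Lpast (hL : ∀ k, Measurable (L k)) (t : ℕ) (l : Fin K → 𝓛) :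
    MeasurableSet (Lpast L t l) := by
  simp only [Lpast, Set.ofPred_forall]
  exact .iInter fun k => .iInter fun _ => hL k (measurableSet_singleton _)

lemma measurableSet_Apast (hA : ∀ k, Measurable (A k)) (t : ℕ) (b : Fin K → Bool) :
    MeasurableSet (Apast A t b) := by
  simp only [Apast, Set.ofPred_forall]
  exact .iInter fun k => .iInter fun _ => hA k (measurableSet_singleton _)

lemma measurableSet_EtrV (hA : ∀ k, Measurable (A k)) (m : ℕ) (as : Fin K → Bool) :
    MeasurableSet (EtrV A m as) := by
  simp only [EtrV, Set.ofPred_forall]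
  exact .iInter fun k => .iInter fun _ => hA k (measurableSet_singleton _)

lemma measurableSet_hist_preimage (hL : ∀ k, Measurable (L k)) (hA : ∀ k, Measurable (A k))
    (t : ℕ) (x) : MeasurableSet (hist L A t ⁻¹' {x}) :=
  forall_hist_preimage .empty (fun l b => (measurableSet_Lpast hL t l).inter
    (measurableSet_Apast hA t b)) x

end History

section Identification

variable {Ω : Type*} [MeasurableSpace Ω] {P : Measure Ω} {𝓛 : Type*} {K m : ℕ}
  {L : Fin K → Ω → 𝓛} {A : Fin K → Ω → Bool}

lemma toReal_measure_EtrV [IsProbabilityMeasure P] (as : Fin K → Bool) :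
    (P (EtrV A m as)).toReal = ∏ k ∈ univ.filter (fun k : Fin K => K - m ≤ (k : ℕ)),
      cP P {ω | A k ω = as k} (Aseg A (K - m) k as) := by
  have hEtrV : EtrV A m as = ⋂ k ∈ univ.filter (fun k : Fin K => K - m ≤ (k : ℕ)),
      {ω | A k ω = as k} := by
    ext ω
    simp [EtrV]
  rw [hEtrV, toReal_measure_biInter_eq_prod_cP]
  refine prod_congr rfl fun k _ => congrArg _ ?_
  ext ω
  simp [Aseg]

lemma indicator_EtrV_Wrsw [IsProbabilityMeasure P] (as : Fin K → Bool) (ω : Ω) :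
    (EtrV A m as).indicator (Wrsw P A L m) ω = (P (EtrV A m as)).toReal *
      ∏ k ∈ univ.filter (fun k : Fin K => K - m ≤ (k : ℕ)),
        ipWeight P (hist L A k) {ω | A k ω = as k} ω := by
  by_cases hω : ω ∈ EtrV A m as
  · rw [Set.indicator_of_mem hω, toReal_measure_EtrV, ← prod_mul_distrib]
    refine prod_congr rfl fun k hk => ?_
    have hk : A k ω = as k := hω k (mem_filter.1 hk).2
    rw [ipWeight, Set.indicator_of_mem (show ω ∈ {ω | A k ω = as k} from hk), hist_preimage_hist,
      hk, Aseg_eq_of_mem_EtrV hω, div_eq_mul_inv]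
  · obtain ⟨k, hkS, hk⟩ : ∃ k ∈ univ.filter (fun k : Fin K => K - m ≤ (k : ℕ)), A k ω ≠ as k := by
      simpa [EtrV] using hω
    rw [Set.indicator_of_notMem hω, mul_eq_zero_of_right _ (prod_eq_zero hkS
      (Set.indicator_of_notMem (s := {ω | A k ω = as k}) hk _))]

theorem setIntegral_EtrV_Wrsw_mul [IsProbabilityMeasure P] [Fintype 𝓛] [MeasurableSpace 𝓛]
    [MeasurableSingletonClass 𝓛] (hL : ∀ k, Measurable (L k)) (hA : ∀ k, Measurable (A k))
    (as : Fin K → Bool) {u : Ω → ℝ} (hu : Integrable u P)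
    (hci : ∀ t : Fin K, K - m ≤ (t : ℕ) → CondMeanIndep P u {ω | A t ω = as t} (hist L A t))
    (hpos : ∀ t : Fin K, K - m ≤ (t : ℕ) → ∀ x, 0 < P (hist L A t ⁻¹' {x}) →
      0 < cP P {ω | A t ω = as t} (hist L A t ⁻¹' {x})) :
    ∫ ω in EtrV A m as, Wrsw P A L m ω * u ω ∂P = (P (EtrV A m as)).toReal * ∫ ω, u ω ∂P := by
  rw [← integral_indicator (measurableSet_EtrV hA m as)]
  simp_rw [Set.indicator_mul_left, indicator_EtrV_Wrsw, mul_assoc]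
  rw [integral_const_mul, integral_prod_ipWeight_mul (X := fun k : Fin K => hist L A k)
    (E := fun k => {ω | A k ω = as k})
    (fun t => measurableSet_hist_preimage hL hA t) (fun k => hA k (measurableSet_singleton _))
    (fun j k hjk => hist_factorsThrough (Fin.val_le_of_le hjk.le))
    (fun j k hjk ω ω' h => by simp only [Set.mem_ofPred_eq, apply_factorsThrough_hist hjk h]) hu
    _ (fun k hk => hci k (mem_filter.1 hk).2) (fun k hk => hpos k (mem_filter.1 hk).2)]

lemma condMeanIndep_hist [IsFiniteMeasure P] [MeasurableSpace 𝓛] [MeasurableSingletonClass 𝓛]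
    (hL : ∀ k, Measurable (L k)) (hA : ∀ k, Measurable (A k)) {t : ℕ} {u : Ω → ℝ}
    (hu : AEMeasurable u P) {E : Set Ω} (hE : MeasurableSet E)
    (hindep : ∀ l b, 0 < P (Lpast L t l ∩ Apast A t b) → ∀ B : Set ℝ, MeasurableSet B →
      cP P ({ω | u ω ∈ B} ∩ E) (Lpast L t l ∩ Apast A t b) =
        cP P {ω | u ω ∈ B} (Lpast L t l ∩ Apast A t b) * cP P E (Lpast L t l ∩ Apast A t b)) :
    CondMeanIndep P u E (hist L A t) :=
  forall_hist_preimage (p := fun F => 0 < P F → ∫ ω in E ∩ F, u ω ∂P = cP P E F * ∫ ω in F, u ω ∂P)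
    (by simp) fun l b hpos => setIntegral_inter_eq_cP_mul hu hE
      ((measurableSet_Lpast hL t l).inter (measurableSet_Apast hA t b)) (hindep l b hpos)

lemma integrable_Ypotm (hA : ∀ k, Measurable (A k)) {Ypot : (Fin K → Bool) → Ω → ℝ}
    (hYpi : ∀ a, Integrable (Ypot a) P) (as : Fin K → Bool) : Integrable (Ypotm A m Ypot as) P :=
  integrable_select_of_fintype (F := Ypot) (measurable_pi_lambda _ fun k => by
    by_cases hk : (k : ℕ) < K - m <;> simp [hk, hA k]) hYpi

end Identification

theorem hrmsm_identification_general
    {Ω : Type*} [MeasurableSpace Ω] {𝓛 : Type*} [MeasurableSpace 𝓛]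
    [Fintype 𝓛] [MeasurableSingletonClass 𝓛]
    (P : Measure Ω) [IsProbabilityMeasure P]
    {K m : ℕ}
    (A : Fin K → Ω → Bool) (L : Fin K → Ω → 𝓛)
    (hA : ∀ k, Measurable (A k)) (hL : ∀ k, Measurable (L k))
    (Y : Ω → ℝ)
    (Ypot : (Fin K → Bool) → Ω → ℝ)
    (hYpi : ∀ a, Integrable (Ypot a) P)
    -- (A1′) restricted consistency
    (hA1' : ∀ (as : Fin K → Bool) (ω : Ω),
      (∀ k : Fin K, K - m ≤ (k : ℕ) → A k ω = as k) → Y ω = Ypotm A m Ypot as ω)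
    -- (A2′) restricted sequential exchangeability
    (hA2' : ∀ t : Fin K, K - m ≤ (t : ℕ) →
      ∀ (as : Fin K → Bool) (B : Set ℝ), MeasurableSet B →
      ∀ (av : Bool) (l : Fin K → 𝓛) (b : Fin K → Bool),
        0 < P (Lpast L (t : ℕ) l ∩ Apast A (t : ℕ) b) →
        cP P ({ω | Ypotm A m Ypot as ω ∈ B} ∩ {ω | A t ω = av})
            (Lpast L (t : ℕ) l ∩ Apast A (t : ℕ) b) =
          cP P {ω | Ypotm A m Ypot as ω ∈ B} (Lpast L (t : ℕ) l ∩ Apast A (t : ℕ) b) *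
            cP P {ω | A t ω = av} (Lpast L (t : ℕ) l ∩ Apast A (t : ℕ) b))
    -- (A3′) restricted positivity
    (hA3' : ∀ t : Fin K, K - m ≤ (t : ℕ) →
      ∀ (av : Bool) (l : Fin K → 𝓛) (b : Fin K → Bool),
        0 < P (Lpast L (t : ℕ) l ∩ Apast A (t : ℕ) b) →
        0 < cP P {ω | A t ω = av} (Lpast L (t : ℕ) l ∩ Apast A (t : ℕ) b)) :
    (∀ as : Fin K → Bool,
      (∫ ω in EtrV A m as, Wrsw P A L m ω * Y ω ∂P) =
        (P (EtrV A m as)).toReal * ∫ ω, Ypotm A m Ypot as ω ∂P) ∧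
    (0 < P (Etr A m true) → 0 < P (Etr A m false) →
      θW P A m (Wrsw P A L m) Y =
        (∫ ω, Ypotm A m Ypot (fun _ => true) ω ∂P) -
          ∫ ω, Ypotm A m Ypot (fun _ => false) ω ∂P) := by
  have hweighted : ∀ as {u : Ω → ℝ}, Integrable u P →
      (∀ t : Fin K, K - m ≤ (t : ℕ) → CondMeanIndep P u {ω | A t ω = as t} (hist L A t)) →
      ∫ ω in EtrV A m as, Wrsw P A L m ω * u ω ∂P = (P (EtrV A m as)).toReal * ∫ ω, u ω ∂P :=
    fun as u hu hci => setIntegral_EtrV_Wrsw_mul hL hA as hu hci fun t ht =>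
      forall_hist_preimage (p := fun F => 0 < P F → 0 < cP P {ω | A t ω = as t} F) (by simp)
        (hA3' t ht (as t))
  have hidentify : ∀ as, ∫ ω in EtrV A m as, Wrsw P A L m ω * Y ω ∂P =
      (P (EtrV A m as)).toReal * ∫ ω, Ypotm A m Ypot as ω ∂P := by
    intro as
    rw [setIntegral_congr_fun (measurableSet_EtrV hA m as) fun ω hω => by rw [hA1' as ω hω]]
    exact hweighted as (integrable_Ypotm hA hYpi as) fun t ht =>
      condMeanIndep_hist hL hA (integrable_Ypotm hA hYpi as).aemeasurable
      (hA t (measurableSet_singleton _)) fun l b hpos B hB => hA2' t ht as B hB (as t) l b hpos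
  have hmass : ∀ as, ∫ ω in EtrV A m as, Wrsw P A L m ω ∂P = (P (EtrV A m as)).toReal := by
    intro as
    simpa using hweighted as (integrable_const 1) fun t _ => condMeanIndep_const 1 _ _
  refine ⟨hidentify, fun h1 h0 => ?_⟩
  have hne : ∀ b, 0 < P (Etr A m b) → (P (EtrV A m fun _ => b)).toReal ≠ 0 := fun b hb =>
    (ENNReal.toReal_pos hb.ne' (measure_ne_top _ _)).ne'
  simp only [θW, Etr, hidentify, hmass, mul_div_cancel_left₀ _ (hne _ h1),
    mul_div_cancel_left₀ _ (hne _ h0)]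

/-- IP-weighted identification for history-restricted MSMs (equation (B.3.2)):
under (A1′)–(A3′), `𝔼[1{A̲(K−m)=a̲} W_rsw^(m) Y] = P(A̲(K−m)=a̲) 𝔼[Y^{a̲}]`;
consequently `θ_rsw^(m) = θ^(m)` when both target events have positive probability. -/
theorem hrmsm_identification
    {Ω : Type*} [MeasurableSpace Ω] {𝓛 : Type*} [MeasurableSpace 𝓛]
    [Fintype 𝓛] [Nonempty 𝓛] [MeasurableSingletonClass 𝓛]
    (P : Measure Ω) [IsProbabilityMeasure P]
    {K m : ℕ} (hK : 1 ≤ K) (hm1 : 1 ≤ m) (hmK : m ≤ K)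
    (A : Fin K → Ω → Bool) (L : Fin K → Ω → 𝓛)
    (hA : ∀ k, Measurable (A k)) (hL : ∀ k, Measurable (L k))
    (Y : Ω → ℝ) (hY : Measurable Y)
    (Ypot : (Fin K → Bool) → Ω → ℝ)
    (hYpm : ∀ a, Measurable (Ypot a)) (hYpi : ∀ a, Integrable (Ypot a) P)
    -- (A1′) restricted consistency
    (hA1' : ∀ (as : Fin K → Bool) (ω : Ω),
      (∀ k : Fin K, K - m ≤ (k : ℕ) → A k ω = as k) → Y ω = Ypotm A m Ypot as ω)
    -- (A2′) restricted sequential exchangeability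
    (hA2' : ∀ t : Fin K, K - m ≤ (t : ℕ) →
      ∀ (as : Fin K → Bool) (B : Set ℝ), MeasurableSet B →
      ∀ (av : Bool) (l : Fin K → 𝓛) (b : Fin K → Bool),
        0 < P (Lpast L (t : ℕ) l ∩ Apast A (t : ℕ) b) →
        cP P ({ω | Ypotm A m Ypot as ω ∈ B} ∩ {ω | A t ω = av})
            (Lpast L (t : ℕ) l ∩ Apast A (t : ℕ) b) =
          cP P {ω | Ypotm A m Ypot as ω ∈ B} (Lpast L (t : ℕ) l ∩ Apast A (t : ℕ) b) *
            cP P {ω | A t ω = av} (Lpast L (t : ℕ) l ∩ Apast A (t : ℕ) b))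
    -- (A3′) restricted positivity
    (hA3' : ∀ t : Fin K, K - m ≤ (t : ℕ) →
      ∀ (av : Bool) (l : Fin K → 𝓛) (b : Fin K → Bool),
        0 < P (Lpast L (t : ℕ) l ∩ Apast A (t : ℕ) b) →
        0 < cP P {ω | A t ω = av} (Lpast L (t : ℕ) l ∩ Apast A (t : ℕ) b)) :
    (∀ as : Fin K → Bool,
      (∫ ω in EtrV A m as, Wrsw P A L m ω * Y ω ∂P) =
        (P (EtrV A m as)).toReal * ∫ ω, Ypotm A m Ypot as ω ∂P) ∧
    (0 < P (Etr A m true) → 0 < P (Etr A m false) →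
      θW P A m (Wrsw P A L m) Y =
        (∫ ω, Ypotm A m Ypot (fun _ => true) ω ∂P) -
          ∫ ω, Ypotm A m Ypot (fun _ => false) ω ∂P) :=
  hrmsm_identification_general P A L hA hL Y Ypot hYpi hA1' hA2' hA3'

end MSMPaper
end
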